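/- arXiv:2604.04987 — 7 statements merged into one kernel-verified Lean document; each statement's English description precedes it below -/
import Mathlib

section
/- Let V be a finite nonempty type, and let p and h be probability distributions on V with p(i) > 0 for all i. Define the acceptance rate φ(i) = min{h(i)/p(i), 1} and Z = ∑_i p(i)·(1 − φ(i)), and assume Z > 0. Define g(i) = (h(i) − p(i)·φ(i)) / Z. Then g is a probability distribution on V (i.e., g(i) ≥ 0 for all i and ∑_i g(i) = 1), and for every n ∈ V, p(n)·φ(n) + Z·g(n) = h(n); that is, one step of the draft-and-verify scheme with acceptance rate φ and recover distribution g produces exactly the target distribution h. -/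
/-- One step of the draft-and-verify scheme with the optimal acceptance rate
`φ i = min (h i / p i) 1` and recover distribution `g` produces exactly the
target distribution `h`. -/
theorem stmt_0 {V : Type*} [Fintype V] [Nonempty V]
    (p h : V → ℝ)
    (hp_pos : ∀ i, 0 < p i) (hp_sum : ∑ i, p i = 1)
    (hh_nonneg : ∀ i, 0 ≤ h i) (hh_sum : ∑ i, h i = 1)
    (φ : V → ℝ) (hφ : ∀ i, φ i = min (h i / p i) 1)
    (Z : ℝ) (hZ : Z = ∑ i, p i * (1 - φ i)) (hZ_pos : 0 < Z)
    (g : V → ℝ) (hg : ∀ i, g i = (h i - p i * φ i) / Z) :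
    (∀ i, 0 ≤ g i) ∧ (∑ i, g i = 1) ∧ (∀ n, p n * φ n + Z * g n = h n) := by
  have key : ∀ i, p i * φ i = min (h i) (p i) := by
    intro i
    rw [hφ i]
    rcases le_total (h i / p i) 1 with hle | hle
    · rw [min_eq_left hle, min_eq_left ((div_le_one (hp_pos i)).mp hle)]
      rw [mul_div_assoc', mul_comm, mul_div_assoc, div_self (hp_pos i).ne', mul_one]
    · rw [min_eq_right hle, min_eq_right ((one_le_div (hp_pos i)).mp hle)]
      ring
  have hmin : ∀ i, min (h i) (p i) ≤ h i := fun i => min_le_left _ _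
  have hgnn : ∀ i, 0 ≤ g i := by
    intro i
    rw [hg i]
    apply div_nonneg _ hZ_pos.le
    rw [key i]; linarith [hmin i]
  have hZeq : Z = ∑ i, (h i - p i * φ i) := by
    rw [hZ]
    have : ∀ i, p i * (1 - φ i) = p i - min (h i) (p i) := by
      intro i; rw [mul_sub, mul_one, key i]
    rw [Finset.sum_congr rfl (fun i _ => this i)]
    have : ∀ i ∈ Finset.univ, h i - p i * φ i = h i - min (h i) (p i) := by
      intro i _; rw [key i]
    rw [Finset.sum_congr rfl this, Finset.sum_sub_distrib, Finset.sum_sub_distrib,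
      hp_sum, hh_sum]
  refine ⟨hgnn, ?_, ?_⟩
  · have : ∑ i, g i = (∑ i, (h i - p i * φ i)) / Z := by
      rw [Finset.sum_congr rfl (fun i _ => hg i), Finset.sum_div]
    rw [this, ← hZeq, div_self hZ_pos.ne']
  · intro n
    rw [hg n, mul_div_cancel₀ _ hZ_pos.ne']
    ring
end

section
/- Let f : ℝ → ℝ be convex, let V be a finite type, let q be a probability distribution on V with q(i) > 0 for all i, fix n ∈ V with q(n) < 1, and let h be any probability distribution on V. Then ∑_{i ∈ V} q(i)·f(h(i)/q(i)) ≥ q(n)·f(h(n)/q(n)) + (1 − q(n))·f((1 − h(n))/(1 − q(n))). In particular, the f-divergence D_f(h‖q) is bounded below by the binary f-divergence between the Bernoulli distributions (h(n), 1−h(n)) and (q(n), 1−q(n)). -/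
open Finset

/-- Jensen's inequality for the perspective `(w, x) ↦ w * f (x / w)` of a convex function. -/
theorem ConvexOn.sum_mul_map_sum_div_le {𝕜 ι : Type*} [Field 𝕜] [LinearOrder 𝕜]
    [IsStrictOrderedRing 𝕜] {s : Set 𝕜} {f : 𝕜 → 𝕜} (hf : ConvexOn 𝕜 s f) {t : Finset ι}
    {w x : ι → 𝕜} (hw : ∀ i ∈ t, 0 < w i) (hmem : ∀ i ∈ t, x i / w i ∈ s) :
    (∑ i ∈ t, w i) * f ((∑ i ∈ t, x i) / ∑ i ∈ t, w i) ≤ ∑ i ∈ t, w i * f (x i / w i) := by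
  obtain rfl | ht := t.eq_empty_or_nonempty
  · simp
  have hW : 0 < ∑ i ∈ t, w i := sum_pos hw ht
  have hsmul : ∀ i ∈ t, w i • (x i / w i) = x i := fun i hi => by
    rw [smul_eq_mul, mul_div_cancel₀ _ (hw i hi).ne']
  have jensen := hf.map_centerMass_le (fun i hi => (hw i hi).le) hW hmem
  rw [centerMass, centerMass, sum_congr rfl hsmul, smul_eq_mul, inv_mul_eq_div,
    smul_eq_mul, inv_mul_eq_div, le_div_iff₀' hW] at jensen
  simpa only [smul_eq_mul, div_eq_inv_mul, Function.comp_apply] using jensen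

theorem stmt_3_general {V : Type*} [Fintype V]
    (f : ℝ → ℝ) (hf : ConvexOn ℝ Set.univ f)
    (q : V → ℝ) (hq_pos : ∀ i, 0 < q i) (hq_sum : ∑ i, q i = 1)
    (n : V)
    (h : V → ℝ) (hh_sum : ∑ i, h i = 1) :
    q n * f (h n / q n) + (1 - q n) * f ((1 - h n) / (1 - q n)) ≤
      ∑ i, q i * f (h i / q i) := by
  classical
  have hq_rest : ∑ i ∈ univ.erase n, q i = 1 - q n := by
    rw [← hq_sum, ← add_sum_erase _ _ (mem_univ n), add_sub_cancel_left]
  have hh_rest : ∑ i ∈ univ.erase n, h i = 1 - h n := by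
    rw [← hh_sum, ← add_sum_erase _ _ (mem_univ n), add_sub_cancel_left]
  have rest := hf.sum_mul_map_sum_div_le (t := univ.erase n) (x := h)
    (fun i _ => hq_pos i) (fun i _ => Set.mem_univ _)
  rw [hq_rest, hh_rest] at rest
  rw [← add_sum_erase _ _ (mem_univ n)]
  exact add_le_add_right rest _

/-- Data-processing-type lower bound: the `f`-divergence `D_f(h‖q)` is at least
the binary `f`-divergence between the Bernoulli distributions `(h n, 1 - h n)`
and `(q n, 1 - q n)`. -/
theorem stmt_3 {V : Type*} [Fintype V] [Nonempty V]
    (f : ℝ → ℝ) (hf : ConvexOn ℝ Set.univ f)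
    (q : V → ℝ) (hq_pos : ∀ i, 0 < q i) (hq_sum : ∑ i, q i = 1)
    (n : V) (hqn : q n < 1)
    (h : V → ℝ) (hh_nonneg : ∀ i, 0 ≤ h i) (hh_sum : ∑ i, h i = 1) :
    q n * f (h n / q n) + (1 - q n) * f ((1 - h n) / (1 - q n)) ≤
      ∑ i, q i * f (h i / q i) :=
  stmt_3_general f hf q hq_pos hq_sum n h hh_sum
end

section
/- Let f : ℝ → ℝ be convex with f(1) = 0, let V be a finite type, let q be a probability distribution on V with q(i) > 0 for all i, fix n ∈ V with q(n) < 1, and let γ ∈ [0,1]. Define h by h(n) = γ and h(i) = ((1 − γ)/(1 − q(n)))·q(i) for i ≠ n. Then h is a probability distribution on V, and D_f(h‖q) = q(n)·f(γ/q(n)) + (1 − q(n))·f((1 − γ)/(1 − q(n))). -/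
open Finset

theorem Finset.sum_eq_add_mul_sum_erase_of_eq_mul {V R : Type*} [Fintype V] [DecidableEq V]
    [NonUnitalNonAssocSemiring R] {g q : V → R} {c : R} (n : V)
    (hg : ∀ i, i ≠ n → g i = c * q i) :
    ∑ i, g i = g n + c * ∑ i ∈ univ.erase n, q i := by
  rw [← add_sum_erase univ g (mem_univ n), mul_sum,
    sum_congr rfl fun i hi => hg i (ne_of_mem_erase hi)]

theorem stmt_4_general {V : Type*} [Fintype V]
    (f : ℝ → ℝ)
    (q : V → ℝ) (hq_pos : ∀ i, 0 < q i) (hq_sum : ∑ i, q i = 1)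
    (n : V) (hqn : q n < 1)
    (γ : ℝ) (hγ : γ ∈ Set.Icc (0 : ℝ) 1)
    (h : V → ℝ) (hhn : h n = γ)
    (hhi : ∀ i, i ≠ n → h i = (1 - γ) / (1 - q n) * q i) :
    (∀ i, 0 ≤ h i) ∧ (∑ i, h i = 1) ∧
      ∑ i, q i * f (h i / q i) =
        q n * f (γ / q n) + (1 - q n) * f ((1 - γ) / (1 - q n)) := by
  classical
  obtain ⟨hγ0, hγ1⟩ := hγ
  have hqn' : 0 < 1 - q n := sub_pos.2 hqn
  have hrest : ∑ i ∈ univ.erase n, q i = 1 - q n := by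
    rw [sum_erase_eq_sub (mem_univ n), hq_sum]
  have hdiv : ∀ i, i ≠ n → q i * f (h i / q i) = f ((1 - γ) / (1 - q n)) * q i := by
    intro i hi
    rw [hhi i hi, mul_div_cancel_right₀ _ (hq_pos i).ne', mul_comm]
  refine ⟨fun i => ?_, ?_, ?_⟩
  · rcases eq_or_ne i n with rfl | hi
    · exact hhn ▸ hγ0
    · rw [hhi i hi]
      exact mul_nonneg (div_nonneg (sub_nonneg.2 hγ1) hqn'.le) (hq_pos i).le
  · rw [sum_eq_add_mul_sum_erase_of_eq_mul n hhi, hhn, hrest, div_mul_cancel₀ _ hqn'.ne']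
    ring
  · rw [sum_eq_add_mul_sum_erase_of_eq_mul n hdiv, hhn, hrest, mul_comm (f _)]

/-- The scaled distribution `h` (mass `γ` at `n`, rest proportional to `q`) is a
probability distribution and its `f`-divergence from `q` equals the binary
`f`-divergence. -/
theorem stmt_4 {V : Type*} [Fintype V] [Nonempty V]
    (f : ℝ → ℝ) (hf : ConvexOn ℝ Set.univ f) (hf1 : f 1 = 0)
    (q : V → ℝ) (hq_pos : ∀ i, 0 < q i) (hq_sum : ∑ i, q i = 1)
    (n : V) (hqn : q n < 1)
    (γ : ℝ) (hγ : γ ∈ Set.Icc (0 : ℝ) 1)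
    (h : V → ℝ) (hhn : h n = γ)
    (hhi : ∀ i, i ≠ n → h i = (1 - γ) / (1 - q n) * q i) :
    (∀ i, 0 ≤ h i) ∧ (∑ i, h i = 1) ∧
      ∑ i, q i * f (h i / q i) =
        q n * f (γ / q n) + (1 - q n) * f ((1 - γ) / (1 - q n)) :=
  stmt_4_general f q hq_pos hq_sum n hqn γ hγ h hhn hhi
end

section
/- Let f : ℝ → ℝ be convex and continuous with f(1) = 0, let V be a finite type, let q be a probability distribution on V with q(i) > 0 for all i, fix n ∈ V with q(n) < 1, and let δ ≥ 0. Define Φ(γ) = q(n)·f(γ/q(n)) + (1 − q(n))·f((1 − γ)/(1 − q(n))) and γ* = sup{γ ∈ [q(n), 1] : Φ(γ) ≤ δ}. Then: (i) γ* ∈ [q(n), 1] and the scaled distribution h* with h*(n) = γ* and h*(i) = ((1 − γ*)/(1 − q(n)))·q(i) for i ≠ n satisfies D_f(h*‖q) ≤ δ; and (ii) every probability distribution h on V with D_f(h‖q) ≤ δ satisfies h(n) ≤ γ*. That is, h* maximizes the probability of the token n among all distributions within f-divergence δ of q. -/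
/-- With `γ* = sup {γ ∈ [q n, 1] : Φ γ ≤ δ}`, the scaled distribution `h*`
satisfies the divergence constraint and maximizes the probability of token `n`
among all distributions within `f`-divergence `δ` of `q`. -/
theorem stmt_6 {V : Type*} [Fintype V] [Nonempty V]
    (f : ℝ → ℝ) (hf : ConvexOn ℝ Set.univ f) (hf_cont : Continuous f) (hf1 : f 1 = 0)
    (q : V → ℝ) (hq_pos : ∀ i, 0 < q i) (hq_sum : ∑ i, q i = 1)
    (n : V) (hqn : q n < 1)
    (δ : ℝ) (hδ : 0 ≤ δ)
    (Φ : ℝ → ℝ)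
    (hΦ : ∀ γ, Φ γ = q n * f (γ / q n) + (1 - q n) * f ((1 - γ) / (1 - q n)))
    (γs : ℝ) (hγs : γs = sSup {γ | γ ∈ Set.Icc (q n) 1 ∧ Φ γ ≤ δ})
    (hstar : V → ℝ) (hstar_n : hstar n = γs)
    (hstar_i : ∀ i, i ≠ n → hstar i = (1 - γs) / (1 - q n) * q i) :
    γs ∈ Set.Icc (q n) 1 ∧
      (∑ i, q i * f (hstar i / q i)) ≤ δ ∧
      (∀ h : V → ℝ, (∀ i, 0 ≤ h i) → (∑ i, h i = 1) →
        (∑ i, q i * f (h i / q i)) ≤ δ → h n ≤ γs) := by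
  classical
  have hc : 0 < q n := hq_pos n
  have hc1 : (0:ℝ) < 1 - q n := by linarith
  have hΦfun : Φ = fun γ => q n * f (γ / q n) + (1 - q n) * f ((1 - γ) / (1 - q n)) :=
    funext hΦ
  have hΦcont : Continuous Φ := by
    rw [hΦfun]
    fun_prop
  set S : Set ℝ := {γ | γ ∈ Set.Icc (q n) 1 ∧ Φ γ ≤ δ} with hS
  have hqnS : q n ∈ S := by
    constructor
    · exact ⟨le_refl _, le_of_lt hqn⟩
    · rw [hΦ]
      rw [div_self hc.ne', div_self hc1.ne', hf1]
      simpa using hδ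
  have hSne : S.Nonempty := ⟨q n, hqnS⟩
  have hSbdd : BddAbove S := ⟨1, fun x hx => hx.1.2⟩
  have hSclosed : IsClosed S := by
    have : S = Set.Icc (q n) 1 ∩ Φ ⁻¹' (Set.Iic δ) := rfl
    rw [this]
    exact isClosed_Icc.inter (isClosed_Iic.preimage hΦcont)
  have hγsS : γs ∈ S := hγs ▸ hSclosed.csSup_mem hSne hSbdd
  have hmem : γs ∈ Set.Icc (q n) 1 := hγsS.1
  -- key Jensen lemma: for any distribution h, Φ (h n) ≤ D_f(h‖q)
  have key : ∀ h : V → ℝ, (∀ i, 0 ≤ h i) → (∑ i, h i = 1) →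
      Φ (h n) ≤ ∑ i, q i * f (h i / q i) := by
    intro h hpos hsum
    have hsplit : ∑ i, q i * f (h i / q i)
        = q n * f (h n / q n) + ∑ i ∈ Finset.univ.erase n, q i * f (h i / q i) :=
      (Finset.add_sum_erase Finset.univ (fun i => q i * f (h i / q i))
        (Finset.mem_univ n)).symm
    have hqsum' : ∑ i ∈ Finset.univ.erase n, q i = 1 - q n := by
      have := Finset.add_sum_erase Finset.univ q (Finset.mem_univ n)
      rw [hq_sum] at this
      linarith
    have hhsum' : ∑ i ∈ Finset.univ.erase n, h i = 1 - h n := by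
      have := Finset.add_sum_erase Finset.univ h (Finset.mem_univ n)
      rw [hsum] at this
      linarith
    have hjensen : f ((1 - h n) / (1 - q n)) ≤
        ∑ i ∈ Finset.univ.erase n, (q i / (1 - q n)) * f (h i / q i) := by
      have := hf.map_sum_le (t := Finset.univ.erase n)
        (w := fun i => q i / (1 - q n)) (p := fun i => h i / q i)
        (fun i _ => div_nonneg (hq_pos i).le hc1.le)
        (by rw [← Finset.sum_div, hqsum', div_self hc1.ne'])
        (fun i _ => Set.mem_univ _)
      simp only [smul_eq_mul] at this
      have heq : ∑ i ∈ Finset.univ.erase n, (q i / (1 - q n)) * (h i / q i)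
          = (1 - h n) / (1 - q n) := by
        rw [← hhsum', Finset.sum_div]
        apply Finset.sum_congr rfl
        intro i _
        rw [div_mul_div_comm, mul_comm (q i), mul_div_mul_right _ _ (hq_pos i).ne']
      rwa [heq] at this
    have h2 : (1 - q n) * f ((1 - h n) / (1 - q n)) ≤
        ∑ i ∈ Finset.univ.erase n, q i * f (h i / q i) := by
      calc (1 - q n) * f ((1 - h n) / (1 - q n))
          ≤ (1 - q n) * ∑ i ∈ Finset.univ.erase n, (q i / (1 - q n)) * f (h i / q i) := by
            exact mul_le_mul_of_nonneg_left hjensen hc1.le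
        _ = ∑ i ∈ Finset.univ.erase n, q i * f (h i / q i) := by
            rw [Finset.mul_sum]
            apply Finset.sum_congr rfl
            intro i _
            field_simp
    rw [hΦ, hsplit]
    linarith
  refine ⟨hmem, ?_, ?_⟩
  · -- D_f(h*‖q) = Φ γs ≤ δ
    have hsplit : ∑ i, q i * f (hstar i / q i)
        = q n * f (hstar n / q n) + ∑ i ∈ Finset.univ.erase n, q i * f (hstar i / q i) :=
      (Finset.add_sum_erase Finset.univ (fun i => q i * f (hstar i / q i))
        (Finset.mem_univ n)).symm
    have hqsum' : ∑ i ∈ Finset.univ.erase n, q i = 1 - q n := by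
      have := Finset.add_sum_erase Finset.univ q (Finset.mem_univ n)
      rw [hq_sum] at this
      linarith
    have heq : ∑ i ∈ Finset.univ.erase n, q i * f (hstar i / q i)
        = (1 - q n) * f ((1 - γs) / (1 - q n)) := by
      calc ∑ i ∈ Finset.univ.erase n, q i * f (hstar i / q i)
          = ∑ i ∈ Finset.univ.erase n, q i * f ((1 - γs) / (1 - q n)) := by
            apply Finset.sum_congr rfl
            intro i hi
            rw [hstar_i i (Finset.ne_of_mem_erase hi),
              mul_div_assoc, div_self (hq_pos i).ne', mul_one]
        _ = (∑ i ∈ Finset.univ.erase n, q i) * f ((1 - γs) / (1 - q n)) := by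
            rw [Finset.sum_mul]
        _ = (1 - q n) * f ((1 - γs) / (1 - q n)) := by rw [hqsum']
    rw [hsplit, heq, hstar_n, ← hΦ]
    exact hγsS.2
  · intro h hpos hsum hdiv
    by_cases hcase : h n ≤ q n
    · exact hcase.trans hmem.1
    · push_neg at hcase
      have hn1 : h n ≤ 1 := by
        rw [← hsum]
        exact Finset.single_le_sum (fun i _ => hpos i) (Finset.mem_univ n)
      have : h n ∈ S := ⟨⟨hcase.le, hn1⟩, (key h hpos hsum).trans hdiv⟩
      rw [hγs]
      exact le_csSup hSbdd this
end

section
/- Let V be a finite nonempty type, let q be a probability distribution on V with q(i) > 0 for all i, let N ≥ 1 be a natural number, and let F be a continuous real-valued function on the N-fold product of the probability simplex over V. For δ ≥ 0 define Γ(δ) = sup{F(h_1, …, h_N) : each h_n is a probability distribution on V with D_KL(h_n‖q) ≤ δ}. Then the supremum is attained for every δ ≥ 0, Γ is monotone nondecreasing on [0,∞), Γ(0) = F(q, …, q), and Γ is continuous on [0,∞). -/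
open Real Set

section Stmt9Aux

variable {V : Type*} [Fintype V]

private lemma mul_log_div_eq {c : ℝ} (hc : c ≠ 0) (x : ℝ) :
    x * Real.log (x / c) = x * Real.log x - x * Real.log c := by
  rcases eq_or_ne x 0 with h | h
  · simp [h]
  · rw [Real.log_div h hc]; ring

private lemma continuous_KL (q : V → ℝ) (hq : ∀ i, q i ≠ 0) :
    Continuous fun h : V → ℝ => ∑ i, h i * Real.log (h i / q i) := by
  have : (fun h : V → ℝ => ∑ i, h i * Real.log (h i / q i))
      = fun h : V → ℝ => ∑ i, (h i * Real.log (h i) - h i * Real.log (q i)) := by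
    funext h
    exact Finset.sum_congr rfl fun i _ => mul_log_div_eq (hq i) _
  rw [this]
  exact continuous_finset_sum _ fun i _ =>
    ((Real.continuous_mul_log.comp (continuous_apply i)).sub
      ((continuous_apply i).mul continuous_const))

private lemma gibbs_term_le {x c : ℝ} (hx : 0 ≤ x) (hc : 0 < c) :
    x - c ≤ x * Real.log (x / c) := by
  rcases eq_or_lt_of_le hx with h | h
  · simp [← h]; linarith
  · have h1 : Real.log (c / x) ≤ c / x - 1 := Real.log_le_sub_one_of_pos (by positivity)
    have h2 : Real.log (x / c) = -Real.log (c / x) := by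
      rw [← Real.log_inv]; congr 1; field_simp
    have h3 : x * Real.log (c / x) ≤ x * (c / x - 1) :=
      mul_le_mul_of_nonneg_left h1 h.le
    have h4 : x * (c / x - 1) = c - x := by field_simp
    rw [h2]; nlinarith

private lemma gibbs_term_eq {x c : ℝ} (hx : 0 ≤ x) (hc : 0 < c)
    (hle : x * Real.log (x / c) ≤ x - c) : x = c := by
  rcases eq_or_lt_of_le hx with h | h
  · exfalso; rw [← h] at hle; simp at hle; linarith
  · by_contra hne
    have hne' : c / x ≠ 1 := by
      intro H
      exact hne ((div_eq_one_iff_eq h.ne').mp H).symm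
    have h1 : Real.log (c / x) < c / x - 1 :=
      Real.log_lt_sub_one_of_pos (by positivity) hne'
    have h2 : Real.log (x / c) = -Real.log (c / x) := by
      rw [← Real.log_inv]; congr 1; field_simp
    have h3 : x * Real.log (c / x) < x * (c / x - 1) :=
      (mul_lt_mul_iff_right₀ h).mpr h1
    have h4 : x * (c / x - 1) = c - x := by field_simp
    rw [h2] at hle; nlinarith

private lemma KL_nonneg {q h : V → ℝ} (hq_pos : ∀ i, 0 < q i) (hq_sum : ∑ i, q i = 1)
    (hh0 : ∀ i, 0 ≤ h i) (hh1 : ∑ i, h i = 1) :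
    0 ≤ ∑ i, h i * Real.log (h i / q i) := by
  have : (0:ℝ) = ∑ i, (h i - q i) := by
    rw [Finset.sum_sub_distrib, hh1, hq_sum]; ring
  rw [this]
  exact Finset.sum_le_sum fun i _ => gibbs_term_le (hh0 i) (hq_pos i)

private lemma KL_eq_zero {q h : V → ℝ} (hq_pos : ∀ i, 0 < q i) (hq_sum : ∑ i, q i = 1)
    (hh0 : ∀ i, 0 ≤ h i) (hh1 : ∑ i, h i = 1)
    (hle : ∑ i, h i * Real.log (h i / q i) ≤ 0) : h = q := by
  have hterm : ∀ i ∈ Finset.univ, (0:ℝ) ≤ h i * Real.log (h i / q i) - (h i - q i) :=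
    fun i _ => sub_nonneg.mpr (gibbs_term_le (hh0 i) (hq_pos i))
  have hsum : ∑ i, (h i * Real.log (h i / q i) - (h i - q i)) = 0 := by
    apply le_antisymm
    · rw [Finset.sum_sub_distrib, Finset.sum_sub_distrib, hh1, hq_sum]
      linarith
    · exact Finset.sum_nonneg hterm
  have heach := (Finset.sum_eq_zero_iff_of_nonneg hterm).mp hsum
  funext i
  exact gibbs_term_eq (hh0 i) (hq_pos i)
    (by have := heach i (Finset.mem_univ i); linarith)

private lemma KL_self {q : V → ℝ} (hq_pos : ∀ i, 0 < q i) :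
    ∑ i, q i * Real.log (q i / q i) = 0 :=
  Finset.sum_eq_zero fun i _ => by
    rw [div_self (hq_pos i).ne', Real.log_one, mul_zero]

private lemma coord_le_one {h : V → ℝ} (hh0 : ∀ i, 0 ≤ h i) (hh1 : ∑ i, h i = 1) (i : V) :
    h i ≤ 1 := by
  rw [← hh1]
  exact Finset.single_le_sum (fun j _ => hh0 j) (Finset.mem_univ i)

private lemma isClosed_simplex : IsClosed {h : V → ℝ | (∀ i, 0 ≤ h i) ∧ ∑ i, h i = 1} := by
  have : {h : V → ℝ | (∀ i, 0 ≤ h i) ∧ ∑ i, h i = 1}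
      = (⋂ i, {h : V → ℝ | 0 ≤ h i}) ∩ {h : V → ℝ | ∑ i, h i = 1} := by
    ext h; simp [Set.mem_iInter]
  rw [this]
  exact (isClosed_iInter fun i => isClosed_le continuous_const (continuous_apply i)).inter
    (isClosed_eq (continuous_finset_sum _ fun i _ => continuous_apply i) continuous_const)

private lemma isCompact_simplex [Nonempty V] :
    IsCompact {h : V → ℝ | (∀ i, 0 ≤ h i) ∧ ∑ i, h i = 1} := by
  rw [Metric.isCompact_iff_isClosed_bounded]
  refine ⟨isClosed_simplex, ?_⟩
  apply Metric.isBounded_closedBall (x := (0 : V → ℝ)) (r := 1) |>.subset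
  intro h hh
  rw [Metric.mem_closedBall]
  rw [dist_pi_le_iff zero_le_one]
  intro i
  rw [Real.dist_eq, Pi.zero_apply, sub_zero, abs_of_nonneg (hh.1 i)]
  exact coord_le_one hh.1 hh.2 i

private lemma isCompact_P [Nonempty V] (N : ℕ) :
    IsCompact {H : Fin N → V → ℝ | ∀ n, (∀ i, 0 ≤ H n i) ∧ ∑ i, H n i = 1} := by
  have : {H : Fin N → V → ℝ | ∀ n, (∀ i, 0 ≤ H n i) ∧ ∑ i, H n i = 1}
      = Set.pi Set.univ (fun _ : Fin N => {h : V → ℝ | (∀ i, 0 ≤ h i) ∧ ∑ i, h i = 1}) := by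
    ext H; simp [Set.mem_pi]
  rw [this]
  exact isCompact_univ_pi fun _ => isCompact_simplex

private lemma isCompact_A [Nonempty V] (q : V → ℝ) (hq_pos : ∀ i, 0 < q i) (N : ℕ) (δ : ℝ) :
    IsCompact {H : Fin N → V → ℝ | ∀ n, ((∀ i, 0 ≤ H n i) ∧ ∑ i, H n i = 1) ∧
      ∑ i, H n i * Real.log (H n i / q i) ≤ δ} := by
  apply IsCompact.of_isClosed_subset (isCompact_P N)
  · have : {H : Fin N → V → ℝ | ∀ n, ((∀ i, 0 ≤ H n i) ∧ ∑ i, H n i = 1) ∧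
        ∑ i, H n i * Real.log (H n i / q i) ≤ δ}
        = ⋂ n, (fun H : Fin N → V → ℝ => H n) ⁻¹'
          ({h : V → ℝ | (∀ i, 0 ≤ h i) ∧ ∑ i, h i = 1} ∩
           {h : V → ℝ | ∑ i, h i * Real.log (h i / q i) ≤ δ}) := by
      ext H; simp [Set.mem_iInter, and_assoc]
    rw [this]
    exact isClosed_iInter fun n =>
      (isClosed_simplex.inter (isClosed_le (continuous_KL q fun i => (hq_pos i).ne')
        continuous_const)).preimage (continuous_apply n)
  · intro H hH n
    exact (hH n).1

private lemma term_convex {x c t : ℝ} (hx : 0 ≤ x) (hc : 0 < c) (ht0 : 0 ≤ t) (ht1 : t ≤ 1) :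
    ((1 - t) * c + t * x) * Real.log (((1 - t) * c + t * x) / c)
      ≤ t * (x * Real.log (x / c)) := by
  have hφ := Real.convexOn_mul_log.2 (Set.mem_Ici.mpr hc.le) (Set.mem_Ici.mpr hx)
    (by linarith : (0:ℝ) ≤ 1 - t) ht0 (by ring)
  simp only [smul_eq_mul] at hφ
  rw [mul_log_div_eq hc.ne', mul_log_div_eq hc.ne']
  nlinarith [hφ]

private lemma scale_props {q h : V → ℝ} (hq_pos : ∀ i, 0 < q i) (hq_sum : ∑ i, q i = 1)
    (hh0 : ∀ i, 0 ≤ h i) (hh1 : ∑ i, h i = 1) {t : ℝ} (ht0 : 0 ≤ t) (ht1 : t ≤ 1) :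
    (∀ i, 0 ≤ (1 - t) * q i + t * h i) ∧
    (∑ i, ((1 - t) * q i + t * h i) = 1) ∧
    (∑ i, ((1 - t) * q i + t * h i) * Real.log (((1 - t) * q i + t * h i) / q i)
        ≤ t * ∑ i, h i * Real.log (h i / q i)) ∧
    (∀ i, |(1 - t) * q i + t * h i - h i| ≤ 1 - t) := by
  refine ⟨fun i => add_nonneg (mul_nonneg (by linarith) (hq_pos i).le) (mul_nonneg ht0 (hh0 i)),
    ?_, ?_, ?_⟩
  · rw [Finset.sum_add_distrib, ← Finset.mul_sum, ← Finset.mul_sum, hq_sum, hh1]; ring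
  · rw [Finset.mul_sum]
    exact Finset.sum_le_sum fun i _ => term_convex (hh0 i) (hq_pos i) ht0 ht1
  · intro i
    have h1 : (1 - t) * q i + t * h i - h i = (1 - t) * (q i - h i) := by ring
    rw [h1, abs_mul, abs_of_nonneg (by linarith : (0:ℝ) ≤ 1 - t)]
    have h2 : |q i - h i| ≤ 1 := by
      rw [abs_le]
      constructor
      · have := coord_le_one hh0 hh1 i; have := (hq_pos i).le; linarith
      · have := coord_le_one (fun j => (hq_pos j).le) hq_sum i; have := hh0 i; linarith
    nlinarith

private lemma lemD [Nonempty V] {q : V → ℝ} (hq_pos : ∀ i, 0 < q i) (hq_sum : ∑ i, q i = 1)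
    {ρ : ℝ} (hρ : 0 < ρ) :
    ∃ m > 0, ∀ h : V → ℝ, (∀ i, 0 ≤ h i) → ∑ i, h i = 1 →
      ∑ i, h i * Real.log (h i / q i) < m → dist h q < ρ := by
  set K : (V → ℝ) → ℝ := fun h => ∑ i, h i * Real.log (h i / q i) with hK
  set T : Set (V → ℝ) := {h | (∀ i, 0 ≤ h i) ∧ ∑ i, h i = 1} ∩ {h | ρ ≤ dist h q} with hT
  by_cases hTne : T.Nonempty
  · have hTcl : IsClosed T := isClosed_simplex.inter
      (isClosed_le continuous_const (continuous_id.dist continuous_const))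
    have hTcomp : IsCompact T :=
      IsCompact.of_isClosed_subset isCompact_simplex hTcl Set.inter_subset_left
    obtain ⟨h₀, h₀T, hmin⟩ := hTcomp.exists_isMinOn hTne
      ((continuous_KL q fun i => (hq_pos i).ne').continuousOn)
    refine ⟨K h₀, ?_, ?_⟩
    · rcases lt_or_eq_of_le (KL_nonneg hq_pos hq_sum h₀T.1.1 h₀T.1.2) with h | h
      · exact h
      · exfalso
        have heq : h₀ = q := KL_eq_zero hq_pos hq_sum h₀T.1.1 h₀T.1.2 (le_of_eq h.symm)
        have hd : ρ ≤ dist h₀ q := h₀T.2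
        rw [heq, dist_self] at hd
        linarith
    · intro h hh0 hh1 hKh
      by_contra hge
      have hhT : h ∈ T := ⟨⟨hh0, hh1⟩, not_lt.mp hge⟩
      exact absurd (hmin hhT) (not_le.mpr hKh)
  · exact ⟨1, one_pos, fun h hh0 hh1 _ => by
      by_contra hge
      exact hTne ⟨h, ⟨hh0, hh1⟩, not_lt.mp hge⟩⟩

end Stmt9Aux

/-- Properties of `Γ(δ) = sup { F(h₁,…,h_N) : D_KL(h_n‖q) ≤ δ for all n }`:
the supremum is attained, `Γ` is monotone nondecreasing on `[0,∞)`,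
`Γ(0) = F(q,…,q)`, and `Γ` is continuous on `[0,∞)`. -/
theorem stmt_9 {V : Type*} [Fintype V] [Nonempty V]
    (q : V → ℝ) (hq_pos : ∀ i, 0 < q i) (hq_sum : ∑ i, q i = 1)
    (N : ℕ) (hN : 1 ≤ N)
    (F : (Fin N → V → ℝ) → ℝ)
    (hF : ContinuousOn F {H | ∀ n, (∀ i, 0 ≤ H n i) ∧ ∑ i, H n i = 1})
    (Γ : ℝ → ℝ)
    (hΓ : ∀ δ, Γ δ = sSup (F '' {H | ∀ n, ((∀ i, 0 ≤ H n i) ∧ ∑ i, H n i = 1) ∧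
        ∑ i, H n i * Real.log (H n i / q i) ≤ δ})) :
    (∀ δ : ℝ, 0 ≤ δ → ∃ H : Fin N → V → ℝ,
        (∀ n, ((∀ i, 0 ≤ H n i) ∧ ∑ i, H n i = 1) ∧
          ∑ i, H n i * Real.log (H n i / q i) ≤ δ) ∧ F H = Γ δ) ∧
      MonotoneOn Γ (Set.Ici 0) ∧
      Γ 0 = F (fun _ => q) ∧
      ContinuousOn Γ (Set.Ici 0) := by
  classical
  set A : ℝ → Set (Fin N → V → ℝ) := fun δ => {H | ∀ n, ((∀ i, 0 ≤ H n i) ∧ ∑ i, H n i = 1) ∧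
      ∑ i, H n i * Real.log (H n i / q i) ≤ δ} with hAdef
  set P : Set (Fin N → V → ℝ) := {H | ∀ n, (∀ i, 0 ≤ H n i) ∧ ∑ i, H n i = 1} with hPdef
  have hAP : ∀ δ, A δ ⊆ P := fun δ H hH n => (hH n).1
  have hAcomp : ∀ δ, IsCompact (A δ) := fun δ => isCompact_A q hq_pos N δ
  have hqS : (∀ i, 0 ≤ q i) ∧ ∑ i, q i = 1 := ⟨fun i => (hq_pos i).le, hq_sum⟩
  have hqA : ∀ δ, 0 ≤ δ → (fun _ : Fin N => q) ∈ A δ := by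
    intro δ hδ n
    exact ⟨hqS, by rw [KL_self hq_pos]; exact hδ⟩
  have hbdd : ∀ δ, BddAbove (F '' A δ) := fun δ =>
    ((hAcomp δ).image_of_continuousOn (hF.mono (hAP δ))).bddAbove
  -- attainment
  have hattain : ∀ δ : ℝ, 0 ≤ δ → ∃ H ∈ A δ, IsGreatest (F '' A δ) (F H) := by
    intro δ hδ
    obtain ⟨H, hHA, hmax⟩ := (hAcomp δ).exists_isMaxOn ⟨_, hqA δ hδ⟩ (hF.mono (hAP δ))
    exact ⟨H, hHA, ⟨Set.mem_image_of_mem F hHA, fun y ⟨x, hx, hxy⟩ => hxy ▸ hmax hx⟩⟩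
  have hΓval : ∀ δ : ℝ, 0 ≤ δ → ∃ H ∈ A δ, F H = Γ δ := by
    intro δ hδ
    obtain ⟨H, hHA, hgr⟩ := hattain δ hδ
    exact ⟨H, hHA, by rw [hΓ δ]; exact hgr.csSup_eq.symm⟩
  -- monotone
  have hmono : MonotoneOn Γ (Set.Ici 0) := by
    intro a ha b hb hab
    rw [hΓ a, hΓ b]
    apply csSup_le_csSup (hbdd b)
    · exact ⟨F (fun _ => q), Set.mem_image_of_mem F (hqA a ha)⟩
    · apply Set.image_mono
      intro H hH n
      exact ⟨(hH n).1, le_trans (hH n).2 hab⟩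
  -- Γ 0
  have hA0 : A 0 = {fun _ : Fin N => q} := by
    apply Set.Subset.antisymm
    · intro H hH
      have : ∀ n, H n = q := fun n =>
        KL_eq_zero hq_pos hq_sum (hH n).1.1 (hH n).1.2 (hH n).2
      simp only [Set.mem_singleton_iff]
      funext n
      exact this n
    · intro H hH
      rw [Set.mem_singleton_iff] at hH
      rw [hH]
      exact hqA 0 le_rfl
  have hΓ0 : Γ 0 = F (fun _ => q) := by
    rw [hΓ 0]
    have : F '' A 0 = {F (fun _ : Fin N => q)} := by rw [hA0, Set.image_singleton]
    rw [this, csSup_singleton]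
  refine ⟨hΓval, hmono, hΓ0, ?_⟩
  -- continuity
  have hPcomp : IsCompact P := isCompact_P N
  intro δ₀ hδ₀
  rw [Metric.continuousWithinAt_iff]
  intro ε hε
  obtain ⟨ρ, hρ, hFρ⟩ := Metric.uniformContinuousOn_iff.mp
    (hPcomp.uniformContinuousOn_of_continuous hF) ε hε
  have hδ₀' : (0:ℝ) ≤ δ₀ := hδ₀
  rcases eq_or_lt_of_le hδ₀' with hc0 | hcpos
  · -- δ₀ = 0
    obtain ⟨m, hm, hmD⟩ := lemD hq_pos hq_sum hρ
    refine ⟨m, hm, ?_⟩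
    intro δ hδmem hδdist
    have hδ0 : (0:ℝ) ≤ δ := hδmem
    obtain ⟨H, hHA, hFH⟩ := hΓval δ hδ0
    rw [← hc0, hΓ0]
    rw [Real.dist_eq] at hδdist ⊢
    rw [← hc0, sub_zero] at hδdist
    have hδm : δ < m := lt_of_abs_lt hδdist
    have hdistH : dist H (fun _ : Fin N => q) < ρ := by
      rw [dist_pi_lt_iff hρ]
      intro n
      exact hmD (H n) (hHA n).1.1 (hHA n).1.2 (lt_of_le_of_lt (hHA n).2 hδm)
    have := hFρ H (hAP δ hHA) (fun _ => q) (fun n => hqS) hdistH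
    rw [Real.dist_eq] at this
    rw [← hFH]
    exact this
  · -- δ₀ > 0
    obtain ⟨H₀, hH₀A, hFH₀⟩ := hΓval δ₀ hδ₀'
    set η : ℝ := min (δ₀ / 2) (δ₀ * ρ / 2) with hηdef
    have hη : 0 < η := lt_min (by linarith) (by positivity)
    refine ⟨η, hη, ?_⟩
    intro δ hδmem hδdist
    have hδ0 : (0:ℝ) ≤ δ := hδmem
    rw [Real.dist_eq] at hδdist
    have habs := abs_lt.mp hδdist
    have hηρ : η / δ₀ < ρ := by
      rw [div_lt_iff₀ hcpos]
      calc η ≤ δ₀ * ρ / 2 := min_le_right _ _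
        _ < δ₀ * ρ := by nlinarith
        _ = ρ * δ₀ := by ring
    rw [Real.dist_eq]
    rcases le_or_gt δ δ₀ with hle | hlt
    · -- δ ≤ δ₀ : left side
      set t : ℝ := δ / δ₀ with htdef
      have ht0 : 0 ≤ t := div_nonneg hδ0 hcpos.le
      have ht1 : t ≤ 1 := by rw [div_le_one hcpos]; exact hle
      set Ht : Fin N → V → ℝ := fun n i => (1 - t) * q i + t * H₀ n i with hHtdef
      have hHtA : Ht ∈ A δ := by
        intro n
        obtain ⟨hs0, hs1, hsK, _⟩ :=
          scale_props hq_pos hq_sum (hH₀A n).1.1 (hH₀A n).1.2 ht0 ht1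
        refine ⟨⟨hs0, hs1⟩, le_trans hsK ?_⟩
        calc t * ∑ i, H₀ n i * Real.log (H₀ n i / q i) ≤ t * δ₀ :=
              mul_le_mul_of_nonneg_left (hH₀A n).2 ht0
          _ = δ := by rw [htdef]; field_simp
      have hΓδ_ge : F Ht ≤ Γ δ := by
        rw [hΓ δ]
        exact le_csSup (hbdd δ) (Set.mem_image_of_mem F hHtA)
      have hdistHt : dist Ht H₀ < ρ := by
        rw [dist_pi_lt_iff hρ]
        intro n
        rw [dist_pi_lt_iff hρ]
        intro i
        obtain ⟨_, _, _, hsd⟩ :=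
          scale_props hq_pos hq_sum (hH₀A n).1.1 (hH₀A n).1.2 ht0 ht1
        rw [Real.dist_eq]
        calc |(1 - t) * q i + t * H₀ n i - H₀ n i| ≤ 1 - t := hsd i
          _ = (δ₀ - δ) / δ₀ := by rw [htdef]; field_simp
          _ ≤ η / δ₀ := by gcongr; linarith [habs.1]
          _ < ρ := hηρ
      have hFHt := hFρ Ht (hAP δ hHtA) H₀ (hAP δ₀ hH₀A) hdistHt
      rw [Real.dist_eq] at hFHt
      have hΓle : Γ δ ≤ Γ δ₀ := hmono hδmem hδ₀ hle
      have : Γ δ₀ - Γ δ < ε := by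
        rw [← hFH₀]
        have h1 := abs_lt.mp hFHt
        linarith
      rw [abs_lt]
      constructor <;> linarith
    · -- δ₀ < δ : right side
      obtain ⟨H, hHA, hFH⟩ := hΓval δ hδ0
      set t : ℝ := δ₀ / δ with htdef
      have hδpos : 0 < δ := lt_trans hcpos hlt
      have ht0 : 0 ≤ t := div_nonneg hcpos.le hδpos.le
      have ht1 : t ≤ 1 := by rw [div_le_one hδpos]; exact hlt.le
      set Ht : Fin N → V → ℝ := fun n i => (1 - t) * q i + t * H n i with hHtdef
      have hHtA : Ht ∈ A δ₀ := by
        intro n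
        obtain ⟨hs0, hs1, hsK, _⟩ :=
          scale_props hq_pos hq_sum (hHA n).1.1 (hHA n).1.2 ht0 ht1
        refine ⟨⟨hs0, hs1⟩, le_trans hsK ?_⟩
        calc t * ∑ i, H n i * Real.log (H n i / q i) ≤ t * δ :=
              mul_le_mul_of_nonneg_left (hHA n).2 ht0
          _ = δ₀ := by rw [htdef]; field_simp
      have hΓδ₀_ge : F Ht ≤ Γ δ₀ := by
        rw [hΓ δ₀]
        exact le_csSup (hbdd δ₀) (Set.mem_image_of_mem F hHtA)
      have hdistHt : dist Ht H < ρ := by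
        rw [dist_pi_lt_iff hρ]
        intro n
        rw [dist_pi_lt_iff hρ]
        intro i
        obtain ⟨_, _, _, hsd⟩ :=
          scale_props hq_pos hq_sum (hHA n).1.1 (hHA n).1.2 ht0 ht1
        rw [Real.dist_eq]
        calc |(1 - t) * q i + t * H n i - H n i| ≤ 1 - t := hsd i
          _ = (δ - δ₀) / δ := by rw [htdef]; field_simp
          _ ≤ (δ - δ₀) / δ₀ := by gcongr <;> linarith
          _ ≤ η / δ₀ := by gcongr; linarith [habs.2]
          _ < ρ := hηρ
      have hFHt := hFρ Ht (hAP δ₀ hHtA) H (hAP δ hHA) hdistHt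
      rw [Real.dist_eq] at hFHt
      have hΓle : Γ δ₀ ≤ Γ δ := hmono hδ₀ hδmem hlt.le
      have : Γ δ - Γ δ₀ < ε := by
        rw [← hFH]
        have h1 := abs_lt.mp hFHt
        linarith
      rw [abs_lt]
      constructor <;> linarith
end

section
/- Let V be a finite type with at least two elements, let q be a probability distribution on V with q(i) > 0 for all i, let m ∈ V satisfy q(m) ≥ q(i) for all i ∈ V, fix n ∈ V with n ≠ m and q(n) < q(m), and let δ ≥ 0. Then the supremum of h(n) over all probability distributions h on V satisfying the typical-acceptance constraint H(h, q) ≤ H(q) + δ equals min{1, (H(q) + δ − log(1/q(m))) / (log(q(m)) − log(q(n)))}, and this supremum equals 1 if and only if q(n) ≥ exp(−H(q) − δ). (Here H(q) ≥ log(1/q(m)), so the displayed ratio is nonnegative.) -/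
/-- The supremum of `h n` over all distributions `h` satisfying the
typical-acceptance constraint `H(h,q) ≤ H(q) + δ` equals
`min 1 ((H(q) + δ - log(1/q m)) / (log (q m) - log (q n)))`, and equals `1`
iff `q n ≥ exp(-H(q) - δ)`. -/
theorem stmt_11 {V : Type*} [Fintype V] (hcard : 2 ≤ Fintype.card V)
    (q : V → ℝ) (hq_pos : ∀ i, 0 < q i) (hq_sum : ∑ i, q i = 1)
    (m : V) (hm : ∀ i, q i ≤ q m)
    (n : V) (hnm : n ≠ m) (hqn : q n < q m)
    (δ : ℝ) (hδ : 0 ≤ δ)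
    (Hq : ℝ) (hHq : Hq = ∑ i, q i * Real.log (1 / q i)) :
    sSup {x : ℝ | ∃ h : V → ℝ, (∀ i, 0 ≤ h i) ∧ (∑ i, h i = 1) ∧
        (∑ i, h i * Real.log (1 / q i)) ≤ Hq + δ ∧ h n = x} =
      min 1 ((Hq + δ - Real.log (1 / q m)) / (Real.log (q m) - Real.log (q n))) ∧
    (sSup {x : ℝ | ∃ h : V → ℝ, (∀ i, 0 ≤ h i) ∧ (∑ i, h i = 1) ∧
        (∑ i, h i * Real.log (1 / q i)) ≤ Hq + δ ∧ h n = x} = 1 ↔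
      Real.exp (-Hq - δ) ≤ q n) := by
  classical
  have hqm0 := hq_pos m
  have hqn0 := hq_pos n
  have hL : 0 < Real.log (q m) - Real.log (q n) :=
    sub_pos.2 (Real.log_lt_log hqn0 hqn)
  set L : ℝ := Real.log (q m) - Real.log (q n) with hLdef
  set r : ℝ := (Hq + δ - Real.log (1 / q m)) / L with hrdef
  have hlogm : Real.log (1 / q m) = - Real.log (q m) := by
    rw [one_div, Real.log_inv]
  have hlogn : Real.log (1 / q n) = - Real.log (q n) := by
    rw [one_div, Real.log_inv]
  -- Hq ≥ log(1/q m)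
  have hHq_ge : Real.log (1 / q m) ≤ Hq := by
    rw [hHq]
    calc Real.log (1 / q m) = ∑ i, q i * Real.log (1 / q m) := by
          rw [← Finset.sum_mul, hq_sum, one_mul]
      _ ≤ ∑ i, q i * Real.log (1 / q i) := by
          apply Finset.sum_le_sum
          intro i _
          apply mul_le_mul_of_nonneg_left _ (hq_pos i).le
          apply Real.log_le_log (by positivity)
          exact one_div_le_one_div_of_le (hq_pos i) (hm i)
  have hr0 : 0 ≤ r := div_nonneg (by linarith) hL.le
  set t : ℝ := min 1 r with htdef
  have ht0 : 0 ≤ t := le_min zero_le_one hr0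
  have ht1 : t ≤ 1 := min_le_left _ _
  have htr : t ≤ r := min_le_right _ _
  -- the witness distribution
  set h0 : V → ℝ := fun i => if i = n then t else if i = m then 1 - t else 0 with hh0
  have key : ∀ a b : ℝ, ∑ i, (if i = n then a else if i = m then b else 0) = a + b := by
    intro a b
    have hsplit : ∀ i, (if i = n then a else if i = m then b else 0) =
        (if i = n then a else 0) + (if i = m then b else 0) := by
      intro i
      by_cases h1 : i = n
      · subst h1; simp [hnm]
      · by_cases h2 : i = m <;> simp [h1, h2, Ne.symm hnm]
    simp_rw [hsplit]
    rw [Finset.sum_add_distrib, Finset.sum_ite_eq' Finset.univ,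
      Finset.sum_ite_eq' Finset.univ]
    simp
  have hsum0 : ∑ i, h0 i = 1 := by
    calc ∑ i, h0 i = t + (1 - t) := key t (1 - t)
      _ = 1 := by ring
  have hcross0 : ∑ i, h0 i * Real.log (1 / q i)
      = t * Real.log (1 / q n) + (1 - t) * Real.log (1 / q m) := by
    have heq : ∀ i, h0 i * Real.log (1 / q i) =
        (if i = n then t * Real.log (1 / q n) else
          if i = m then (1 - t) * Real.log (1 / q m) else 0) := by
      intro i
      by_cases h1 : i = n
      · subst h1; simp [hh0, hnm]
      · by_cases h2 : i = m
        · subst h2; simp [hh0, h1, Ne.symm hnm]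
        · simp [hh0, h1, h2]
    simp_rw [heq]
    exact key _ _
  have hrL : r * L = Hq + δ - Real.log (1 / q m) := div_mul_cancel₀ _ hL.ne'
  have hcon0 : ∑ i, h0 i * Real.log (1 / q i) ≤ Hq + δ := by
    rw [hcross0, hlogm, hlogn]
    have htL : t * L ≤ r * L := mul_le_mul_of_nonneg_right htr hL.le
    rw [hrL, hlogm] at htL
    rw [hLdef] at htL
    nlinarith [htL]
  have h0n : h0 n = t := by simp [hh0]
  have h0pos : ∀ i, 0 ≤ h0 i := by
    intro i
    by_cases h1 : i = n
    · simp [hh0, h1, hnm, ht0]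
    · by_cases h2 : i = m
      · have : h0 i = 1 - t := by simp [hh0, h1, h2, Ne.symm hnm]
        rw [this]; linarith
      · simp [hh0, h1, h2]
  have hmem : t ∈ {x : ℝ | ∃ h : V → ℝ, (∀ i, 0 ≤ h i) ∧ (∑ i, h i = 1) ∧
      (∑ i, h i * Real.log (1 / q i)) ≤ Hq + δ ∧ h n = x} :=
    ⟨h0, h0pos, hsum0, hcon0, h0n⟩
  -- upper bound
  have hub : ∀ x ∈ {x : ℝ | ∃ h : V → ℝ, (∀ i, 0 ≤ h i) ∧ (∑ i, h i = 1) ∧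
      (∑ i, h i * Real.log (1 / q i)) ≤ Hq + δ ∧ h n = x}, x ≤ t := by
    rintro x ⟨h, hpos, hsum, hcon, rfl⟩
    have hle1 : h n ≤ 1 := by
      calc h n ≤ ∑ i, h i :=
            Finset.single_le_sum (fun i _ => hpos i) (Finset.mem_univ n)
        _ = 1 := hsum
    have hkey : h n * Real.log (1 / q n) + (1 - h n) * Real.log (1 / q m)
        ≤ ∑ i, h i * Real.log (1 / q i) := by
      have heq : ∀ i, (if i = n then h n * Real.log (1 / q n) else h i * Real.log (1 / q m)) =
          h i * Real.log (1 / q m) +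
            (if i = n then h n * Real.log (1 / q n) - h n * Real.log (1 / q m) else 0) := by
        intro i
        by_cases h1 : i = n
        · subst h1; rw [if_pos rfl, if_pos rfl]; ring
        · rw [if_neg h1, if_neg h1]; ring
      calc h n * Real.log (1 / q n) + (1 - h n) * Real.log (1 / q m)
          = ∑ i, (if i = n then h n * Real.log (1 / q n) else h i * Real.log (1 / q m)) := by
            simp_rw [heq]
            rw [Finset.sum_add_distrib, ← Finset.sum_mul, hsum,
              Finset.sum_ite_eq' Finset.univ]
            simp only [Finset.mem_univ, if_true, one_mul]
            ring
        _ ≤ ∑ i, h i * Real.log (1 / q i) := by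
            apply Finset.sum_le_sum
            intro i _
            by_cases h1 : i = n
            · subst h1; simp
            · simp only [h1, if_false]
              apply mul_le_mul_of_nonneg_left _ (hpos i)
              apply Real.log_le_log (by positivity)
              exact one_div_le_one_div_of_le (hq_pos i) (hm i)
    have hler : h n ≤ r := by
      rw [hrdef, le_div_iff₀ hL]
      rw [hlogm, hlogn] at hkey
      rw [hLdef, hlogm]
      nlinarith [le_trans hkey hcon]
    exact le_min hle1 hler
  have hsup : sSup {x : ℝ | ∃ h : V → ℝ, (∀ i, 0 ≤ h i) ∧ (∑ i, h i = 1) ∧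
      (∑ i, h i * Real.log (1 / q i)) ≤ Hq + δ ∧ h n = x} = t :=
    le_antisymm (csSup_le ⟨t, hmem⟩ hub) (le_csSup ⟨t, hub⟩ hmem)
  refine ⟨hsup, ?_⟩
  rw [hsup, htdef, min_eq_left_iff]
  rw [hrdef, one_le_div hL]
  rw [← Real.le_log_iff_exp_le hqn0]
  rw [hLdef, hlogm]
  constructor <;> intro hx <;> linarith
end

section
/- Let q₀ and γ be real numbers with 0 < q₀ ≤ γ ≤ 1/2. Then γ·log(γ/q₀) + (1 − γ)·log((1 − γ)/(1 − q₀)) ≤ (γ − q₀)² / (2·q₀·(1 − q₀)); that is, on the interval (q₀, 1/2] the binary KL divergence Φ(γ) is bounded above by its second-order Taylor polynomial expanded at q₀. -/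
/-!
The divergence `binaryKL q` and its derivative, the log odds ratio
`log (x / q) - log ((1 - x) / (1 - q))`, both vanish at `x = q`. The log odds ratio has derivative
`1 / (x (1 - x))`, which on `[q, 1 - q]` is at most `1 / (q (1 - q))`, the second derivative of
the Taylor polynomial. Comparing derivatives twice on `[q, 1 - q] ⊇ [q, 1/2]` gives the bound.
-/

open Real Set

theorem image_le_of_hasDerivAt_le {f f' g g' : ℝ → ℝ} {a b : ℝ}
    (hf : ∀ x ∈ Icc a b, HasDerivAt f (f' x) x) (hg : ∀ x ∈ Icc a b, HasDerivAt g (g' x) x)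
    (ha : f a ≤ g a) (bound : ∀ x ∈ Ico a b, f' x ≤ g' x) :
    ∀ ⦃x⦄, x ∈ Icc a b → f x ≤ g x :=
  image_le_of_deriv_right_le_deriv_boundary
    (fun x hx => (hf x hx).continuousAt.continuousWithinAt)
    (fun x hx => (hf x (Ico_subset_Icc_self hx)).hasDerivWithinAt) ha
    (fun x hx => (hg x hx).continuousAt.continuousWithinAt)
    (fun x hx => (hg x (Ico_subset_Icc_self hx)).hasDerivWithinAt) bound

lemma mul_one_sub_le_mul_one_sub {q x : ℝ} (hqx : q ≤ x) (hx : x ≤ 1 - q) :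
    q * (1 - q) ≤ x * (1 - x) := by
  nlinarith

noncomputable def binaryKL (q γ : ℝ) : ℝ :=
  γ * log (γ / q) + (1 - γ) * log ((1 - γ) / (1 - q))

@[simp] lemma binaryKL_self (q : ℝ) : binaryKL q q = 0 := by
  simp [binaryKL]

lemma hasDerivAt_log_div_const {q x : ℝ} (hq : q ≠ 0) (hx : x ≠ 0) :
    HasDerivAt (fun y => log (y / q)) x⁻¹ x :=
  ((hasDerivAt_id' x).div_const q).log (div_ne_zero hx hq) |>.congr_deriv (by field_simp)

lemma hasDerivAt_log_one_sub_div_const {q x : ℝ} (hq : q ≠ 1) (hx : x ≠ 1) :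
    HasDerivAt (fun y => log ((1 - y) / (1 - q))) (-(1 - x)⁻¹) x :=
  (((hasDerivAt_id' x).const_sub 1).div_const (1 - q)).log
    (div_ne_zero (sub_ne_zero.2 hx.symm) (sub_ne_zero.2 hq.symm)) |>.congr_deriv
    (by field_simp [sub_ne_zero.2 hq.symm, sub_ne_zero.2 hx.symm])

lemma hasDerivAt_binaryKL {q x : ℝ} (hq₀ : q ≠ 0) (hq₁ : q ≠ 1) (hx₀ : x ≠ 0) (hx₁ : x ≠ 1) :
    HasDerivAt (binaryKL q) (log (x / q) - log ((1 - x) / (1 - q))) x :=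
  ((hasDerivAt_id' x).mul (hasDerivAt_log_div_const hq₀ hx₀)).add
    (((hasDerivAt_id' x).const_sub 1).mul (hasDerivAt_log_one_sub_div_const hq₁ hx₁))
    |>.congr_deriv (by field_simp [sub_ne_zero.2 hx₁.symm]; ring)

lemma hasDerivAt_log_odds_ratio {q x : ℝ} (hq₀ : q ≠ 0) (hq₁ : q ≠ 1) (hx₀ : x ≠ 0) (hx₁ : x ≠ 1) :
    HasDerivAt (fun y => log (y / q) - log ((1 - y) / (1 - q))) (x * (1 - x))⁻¹ x :=
  (hasDerivAt_log_div_const hq₀ hx₀).sub (hasDerivAt_log_one_sub_div_const hq₁ hx₁)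
    |>.congr_deriv (by field_simp [sub_ne_zero.2 hx₁.symm]; ring)

lemma mem_Ioo_of_mem_Icc_one_sub {q x : ℝ} (hq : 0 < q) (hx : x ∈ Icc q (1 - q)) :
    x ∈ Ioo 0 1 :=
  ⟨hq.trans_le hx.1, by linarith [hx.2]⟩

lemma log_odds_ratio_le {q x : ℝ} (hq : 0 < q) (hqx : q ≤ x) (hx : x ≤ 1 - q) :
    log (x / q) - log ((1 - x) / (1 - q)) ≤ (x - q) / (q * (1 - q)) := by
  have hq₁ : q < 1 := by linarith
  have hqq : 0 < q * (1 - q) := mul_pos hq (by linarith)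
  have hf : ∀ y ∈ Icc q (1 - q),
      HasDerivAt (fun y => log (y / q) - log ((1 - y) / (1 - q))) (y * (1 - y))⁻¹ y := by
    intro y hy
    obtain ⟨hy₀, hy₁⟩ := mem_Ioo_of_mem_Icc_one_sub hq hy
    exact hasDerivAt_log_odds_ratio hq.ne' hq₁.ne hy₀.ne' hy₁.ne
  have hg : ∀ y ∈ Icc q (1 - q),
      HasDerivAt (fun y => (y - q) / (q * (1 - q))) (1 / (q * (1 - q))) y :=
    fun y _ => ((hasDerivAt_id' y).sub_const q).div_const _
  refine image_le_of_hasDerivAt_le hf hg (by simp) (fun y hy => ?_) ⟨hqx, hx⟩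
  rw [one_div]
  exact inv_anti₀ hqq (mul_one_sub_le_mul_one_sub hy.1 hy.2.le)

lemma hasDerivAt_sq_sub_div_const (q c x : ℝ) (hc : c ≠ 0) :
    HasDerivAt (fun y => (y - q) ^ 2 / (2 * c)) ((x - q) / c) x :=
  (((hasDerivAt_id' x).sub_const q).pow 2).div_const (2 * c) |>.congr_deriv (by field_simp; ring)

theorem binaryKL_le_sq_div {q γ : ℝ} (hq : 0 < q) (hqγ : q ≤ γ) (hγ : γ ≤ 1 - q) :
    binaryKL q γ ≤ (γ - q) ^ 2 / (2 * q * (1 - q)) := by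
  have hq₁ : q < 1 := by linarith
  have hf : ∀ y ∈ Icc q (1 - q),
      HasDerivAt (binaryKL q) (log (y / q) - log ((1 - y) / (1 - q))) y := by
    intro y hy
    obtain ⟨hy₀, hy₁⟩ := mem_Ioo_of_mem_Icc_one_sub hq hy
    exact hasDerivAt_binaryKL hq.ne' hq₁.ne hy₀.ne' hy₁.ne
  have hg : ∀ y ∈ Icc q (1 - q),
      HasDerivAt (fun y => (y - q) ^ 2 / (2 * q * (1 - q))) ((y - q) / (q * (1 - q))) y := by
    intro y _
    simpa only [mul_assoc] using hasDerivAt_sq_sub_div_const q _ y (mul_pos hq (by linarith)).ne'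
  exact image_le_of_hasDerivAt_le hf hg (by simp)
    (fun y hy => log_odds_ratio_le hq hy.1 hy.2.le) ⟨hqγ, hγ⟩

/-- On `(q₀, 1/2]`, the binary KL divergence is bounded above by its
second-order Taylor polynomial at `q₀`. -/
theorem stmt_14 (q₀ γ : ℝ) (h0 : 0 < q₀) (h1 : q₀ ≤ γ) (h2 : γ ≤ 1 / 2) :
    γ * Real.log (γ / q₀) + (1 - γ) * Real.log ((1 - γ) / (1 - q₀)) ≤
      (γ - q₀) ^ 2 / (2 * q₀ * (1 - q₀)) :=
  binaryKL_le_sq_div h0 h1 (by linarith)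
end
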